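/- For every n-dimensional lattice Λ and every ε > 0, there exists a vector s ∈ N^{n+1} \ {0} such that the lattice Λ' = {z ∈ Z^{n+1} : ⟨z,s⟩ = 0} has a Gram matrix which, after rescaling by a positive real constant, is within ε of a given Gram matrix of Λ (entrywise). -/

import Mathlib

/-!
Write `G = L Lᵀ` with `L` lower triangular (LDL decomposition). Put `L` strictly below the
diagonal of an `(n+1) × (n+1)` matrix `M`; then `A = 1 + round (r • M)` is a unipotent integer
matrix, and its rows `1, …, n`, divided by `r`, tend to the rows of `M`, so their Gram matrix
is `r² G + o(r²)`.

The rows `1, …, n` of any unimodular integer matrix `A` are a basis of the lattice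
`t^⊥ ∩ ℤ^{n+1}`, where `A t = e₀`: the coordinate `d₀` of `z` in the row basis of `A` is `t ⬝ z`.
Multiplying `A` on the right by a diagonal matrix of signs does not change `A Aᵀ` and makes
`t` nonnegative, which gives `s ∈ ℕ^{n+1}`.
-/

open Filter Topology

theorem tendsto_inv_mul_round_mul (x : ℝ) :
    Tendsto (fun r : ℝ => r⁻¹ * round (r * x)) atTop (𝓝 x) := by
  have key : ∀ r : ℝ, 0 < r → ‖r⁻¹ * round (r * x) - x‖ ≤ r⁻¹ / 2 := fun r hr => by
    rw [show r⁻¹ * round (r * x) - x = r⁻¹ * (round (r * x) - r * x) by field_simp,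
      Real.norm_eq_abs, abs_mul, abs_of_pos (inv_pos.2 hr), abs_sub_comm, div_eq_mul_one_div]
    exact mul_le_mul_of_nonneg_left (abs_sub_round _) (inv_pos.2 hr).le
  rw [← tendsto_sub_nhds_zero_iff]
  exact squeeze_zero_norm' ((eventually_gt_atTop 0).mono key)
    (by simpa using tendsto_inv_atTop_zero.div_const (2 : ℝ))

namespace Matrix

theorem PosDef.exists_isLowerTriangular_eq_mul_transpose {ι : Type*} [Fintype ι] [LinearOrder ι]
    [WellFoundedLT ι] [LocallyFiniteOrderBot ι] {G : Matrix ι ι ℝ} (hG : G.PosDef) :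
    ∃ L : Matrix ι ι ℝ, L.IsLowerTriangular ∧ G = L * Lᵀ := by
  have hd : ∀ i, 0 ≤ LDL.diagEntries hG i := fun i => by
    have := (hG.posSemidef.mul_mul_conjTranspose_same (LDL.lowerInv hG)).diag_nonneg (i := i)
    rwa [← LDL.diag_eq_lowerInv_conj, LDL.diag, diagonal_apply_eq] at this
  refine ⟨LDL.lower hG * diagonal fun i => √(LDL.diagEntries hG i), ?_, ?_⟩
  · exact (blockTriangular_inv_of_blockTriangular (M := LDL.lowerInv hG)
      fun _ _ hij => LDL.lowerInv_triangular hG hij).mul (blockTriangular_diagonal _)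
  · conv_lhs => rw [← LDL.lower_conj_diag hG]
    simp only [conjTranspose_eq_transpose_of_trivial, transpose_mul, diagonal_transpose,
      Matrix.mul_assoc]
    rw [← Matrix.mul_assoc (diagonal _) (diagonal _), diagonal_mul_diagonal, LDL.diag]
    simp only [Real.mul_self_sqrt (hd _)]

section ShiftBelowDiag

variable {n : ℕ} {R : Type*}

/-- `L` placed in rows `1, …, n` and columns `0, …, n - 1`. -/
def shiftBelowDiag [Zero R] (L : Matrix (Fin n) (Fin n) R) :
    Matrix (Fin (n + 1)) (Fin (n + 1)) R :=
  of (Fin.cons 0 fun i => Fin.snoc (L i) 0)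

theorem shiftBelowDiag_eq_zero_of_le [Zero R] {L : Matrix (Fin n) (Fin n) R}
    (hL : L.IsLowerTriangular) {r c : Fin (n + 1)} (h : r ≤ c) : shiftBelowDiag L r c = 0 := by
  cases r using Fin.cases with
  | zero => rfl
  | succ i =>
    cases c using Fin.lastCases with
    | last => simp only [shiftBelowDiag, of_apply, Fin.cons_succ, Fin.snoc_last]
    | cast j =>
      simp only [shiftBelowDiag, of_apply, Fin.cons_succ, Fin.snoc_castSucc]
      exact hL (OrderDual.toDual_lt_toDual.2 (Fin.succ_le_castSucc_iff.1 h))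

theorem shiftBelowDiag_mul_transpose_succ_succ [NonUnitalNonAssocSemiring R]
    (L : Matrix (Fin n) (Fin n) R) (i j : Fin n) :
    (shiftBelowDiag L * (shiftBelowDiag L)ᵀ) i.succ j.succ = (L * Lᵀ) i j := by
  simp only [mul_apply, transpose_apply, shiftBelowDiag, of_apply, Fin.cons_succ,
    Fin.sum_univ_castSucc, Fin.snoc_castSucc, Fin.snoc_last, mul_zero, add_zero]

end ShiftBelowDiag

section UnitriangularRound

variable {ι : Type*}

noncomputable def unitriangularRound [DecidableEq ι] (M : Matrix ι ι ℝ) (r : ℝ) :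
    Matrix ι ι ℤ :=
  1 + M.map fun x => round (r * x)

theorem det_unitriangularRound [Fintype ι] [LinearOrder ι] {M : Matrix ι ι ℝ}
    (hM : ∀ i j, i ≤ j → M i j = 0) (r : ℝ) : (M.unitriangularRound r).det = 1 := by
  rw [det_of_isLowerTriangular _ fun i j hij => ?_]
  · exact Finset.prod_eq_one fun i _ => by simp [unitriangularRound, hM i i le_rfl]
  · have hij : i < j := hij
    simp [unitriangularRound, hM i j hij.le, one_apply_ne hij.ne]

theorem tendsto_smul_map_unitriangularRound [DecidableEq ι] (M : Matrix ι ι ℝ) :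
    Tendsto (fun r : ℝ => r⁻¹ • (M.unitriangularRound r).map (Int.castRingHom ℝ)) atTop
      (𝓝 M) := by
  refine tendsto_pi_nhds.2 fun i => tendsto_pi_nhds.2 fun j => ?_
  simp only [unitriangularRound, smul_apply, map_apply, add_apply, eq_intCast, Int.cast_add,
    smul_eq_mul, mul_add]
  simpa using (tendsto_inv_atTop_zero.mul_const ((1 : Matrix ι ι ℤ) i j : ℝ)).add
    (tendsto_inv_mul_round_mul (M i j))

end UnitriangularRound

theorem exists_det_eq_one_approx_mul_transpose_succ {n : ℕ} {G : Matrix (Fin n) (Fin n) ℝ}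
    (hG : G.PosDef) {ε : ℝ} (hε : 0 < ε) :
    ∃ (A : Matrix (Fin (n + 1)) (Fin (n + 1)) ℤ) (c : ℝ), A.det = 1 ∧ 0 < c ∧
      ∀ i j, |c * ((A * Aᵀ) i.succ j.succ : ℝ) - G i j| < ε := by
  obtain ⟨L, hL, rfl⟩ := hG.exists_isLowerTriangular_eq_mul_transpose
  set M := shiftBelowDiag L
  have hgram : Tendsto (fun r : ℝ => (r ^ 2)⁻¹ •
      (M.unitriangularRound r * (M.unitriangularRound r)ᵀ).map (Int.castRingHom ℝ)) atTop
      (𝓝 (M * Mᵀ)) := by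
    refine (((continuous_id.matrix_mul continuous_id.matrix_transpose).tendsto M).comp
      (tendsto_smul_map_unitriangularRound M)).congr fun r => ?_
    rw [Function.comp_apply, id, transpose_smul, Matrix.mul_smul, Matrix.smul_mul, smul_smul,
      ← sq, inv_pow, ← transpose_map, Matrix.map_mul]
  have hclose : ∀ᶠ r in atTop, ∀ i j,
      |(r ^ 2)⁻¹ * ((M.unitriangularRound r * (M.unitriangularRound r)ᵀ) i.succ j.succ : ℝ)
        - (L * Lᵀ) i j| < ε := by
    simp only [eventually_all]
    intro i j
    have hij := tendsto_pi_nhds.1 (tendsto_pi_nhds.1 hgram i.succ) j.succ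
    rw [shiftBelowDiag_mul_transpose_succ_succ] at hij
    simpa [Real.dist_eq] using Metric.tendsto_nhds.1 hij ε hε
  obtain ⟨r, hr, hr0⟩ := (hclose.and (eventually_gt_atTop 0)).exists
  exact ⟨_, (r ^ 2)⁻¹, det_unitriangularRound (fun _ _ => shiftBelowDiag_eq_zero_of_le hL) r,
    by positivity, hr⟩

theorem exists_basis_ker_dotProductBilin_eq_row_succ {R : Type*} [CommRing R] {n : ℕ}
    {A : Matrix (Fin (n + 1)) (Fin (n + 1)) R} (hA : IsUnit A.det) {t : Fin (n + 1) → R}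
    (ht : A *ᵥ t = Pi.single 0 1) :
    ∃ b : Module.Basis (Fin n) R (LinearMap.ker (dotProductBilin R R t)),
      ∀ i, (b i : Fin (n + 1) → R) = A i.succ := by
  have hmem : ∀ i : Fin n, A i.succ ∈ LinearMap.ker (dotProductBilin R R t) := fun i => by
    have := congrFun ht i.succ
    rw [mulVec, Pi.single_eq_of_ne (Fin.succ_ne_zero i)] at this
    simpa [dotProduct_comm] using this
  have hli : LinearIndependent R fun i : Fin n => (⟨A i.succ, hmem i⟩ : LinearMap.ker _) :=
    .of_comp (Submodule.subtype _) <| (linearIndependent_rows_of_isUnit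
      ((isUnit_iff_isUnit_det A).2 hA)).comp Fin.succ (Fin.succ_injective _)
  refine ⟨.mk hli ?_, fun i => by rw [Module.Basis.mk_apply]⟩
  rintro ⟨z, hz⟩ -
  set d := z ᵥ* A⁻¹
  have hdA : d ᵥ* A = z := by rw [vecMul_vecMul, nonsing_inv_mul _ hA, vecMul_one]
  have hd0 : d 0 = 0 := by
    calc d 0 = d ⬝ᵥ A *ᵥ t := by simp [ht]
      _ = t ⬝ᵥ z := by rw [dotProduct_mulVec, hdA, dotProduct_comm]
      _ = 0 := hz
  have hz_sum : (⟨z, hz⟩ : LinearMap.ker _) = ∑ i, d i.succ • ⟨A i.succ, hmem i⟩ := by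
    ext1
    simp [← hdA, vecMul_eq_sum, Fin.sum_univ_succ, hd0]
  rw [hz_sum]
  exact Submodule.sum_mem _ fun i _ => Submodule.smul_mem _ _ (Submodule.subset_span ⟨i, rfl⟩)

theorem exists_nat_basis_ker_dotProductBilin_gram_eq {n : ℕ}
    {A : Matrix (Fin (n + 1)) (Fin (n + 1)) ℤ} (hA : IsUnit A.det) :
    ∃ s : Fin (n + 1) → ℕ, s ≠ 0 ∧
      ∃ b : Module.Basis (Fin n) ℤ (LinearMap.ker (dotProductBilin ℤ ℤ fun i => (s i : ℤ))),
        ∀ i j, (b i : Fin (n + 1) → ℤ) ⬝ᵥ b j = (A * Aᵀ) i.succ j.succ := by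
  set t := A⁻¹ *ᵥ Pi.single 0 1
  have ht : A *ᵥ t = Pi.single 0 1 := by rw [mulVec_mulVec, mul_nonsing_inv _ hA, one_mulVec]
  set D : Matrix (Fin (n + 1)) (Fin (n + 1)) ℤ := diagonal fun c => if 0 ≤ t c then 1 else -1
  have hDD : D * D = 1 := by
    rw [diagonal_mul_diagonal, ← diagonal_one]
    congr 1
    ext c
    split_ifs <;> rfl
  have hDt : D *ᵥ t = fun c => ((t c).natAbs : ℤ) := by
    ext c
    rw [mulVec_diagonal, Int.natCast_natAbs]
    split_ifs with h
    · rw [one_mul, abs_of_nonneg h]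
    · rw [abs_of_neg (not_le.1 h), neg_one_mul]
  have hbasis := exists_basis_ker_dotProductBilin_eq_row_succ (A := A * D) (t := D *ᵥ t)
    (by rw [det_mul]; exact hA.mul (isUnit_det_of_left_inverse hDD))
    (by rw [mulVec_mulVec, Matrix.mul_assoc, hDD, Matrix.mul_one, ht])
  rw [hDt] at hbasis
  obtain ⟨b, hb⟩ := hbasis
  refine ⟨fun c => (t c).natAbs, fun hs => ?_, b, fun i j => ?_⟩
  · have ht0 : t = 0 := funext fun c => Int.natAbs_eq_zero.1 (congrFun hs c)
    rw [ht0, mulVec_zero] at ht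
    simpa using congrFun ht 0
  · rw [hb, hb]
    change ((A * D) * (A * D)ᵀ) i.succ j.succ = _
    rw [transpose_mul, diagonal_transpose, Matrix.mul_assoc, ← Matrix.mul_assoc D, hDD,
      Matrix.one_mul]

end Matrix

theorem stmt12 (n : ℕ) (G : Matrix (Fin n) (Fin n) ℝ)
    (hG : G.PosDef) (ε : ℝ) (hε : 0 < ε) :
    ∃ s : Fin (n + 1) → ℕ, s ≠ 0 ∧
      ∃ (K : Submodule ℤ (Fin (n + 1) → ℤ))
        (_ : ∀ z : Fin (n + 1) → ℤ, z ∈ K ↔ (∑ i, (s i : ℤ) * z i) = 0)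
        (b : Module.Basis (Fin n) ℤ K) (c : ℝ), 0 < c ∧
          ∀ i j : Fin n,
            |c * ((∑ k, ((b i : Fin (n + 1) → ℤ) k) * ((b j : Fin (n + 1) → ℤ) k) : ℤ) : ℝ)
              - G i j| < ε := by
  obtain ⟨A, c, hA, hc, hAG⟩ := Matrix.exists_det_eq_one_approx_mul_transpose_succ hG hε
  obtain ⟨s, hs, b, hb⟩ := Matrix.exists_nat_basis_ker_dotProductBilin_gram_eq (hA ▸ isUnit_one)
  refine ⟨s, hs, _, fun z => Iff.rfl, b, c, hc, fun i j => ?_⟩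
  have hij := hAG i j
  rwa [← hb] at hij
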